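/- arXiv:1206.7103 — 8 statements merged into one kernel-verified Lean document; each statement's English description precedes it below -/
import Mathlib

section
/- For all natural numbers p ≥ 1, s ≥ 1, and all x, the Fibonacci polynomial identity F_{(2p-1)s}(x) = F_s(x) · ( Σ_{k=0}^{p-1} (-1)^{sk} L_{2(p-k-1)s}(x) − (-1)^{s(p-1)} ) holds. -/
/-- Fibonacci polynomials evaluated at a real `x`. -/
def fibP : ℕ → ℝ → ℝ
  | 0, _ => 0
  | 1, _ => 1
  | n + 2, x => x * fibP (n + 1) x + fibP n x

/-- Lucas polynomials evaluated at a real `x`. -/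
def lucasP : ℕ → ℝ → ℝ
  | 0, _ => 2
  | 1, x => x
  | n + 2, x => x * lucasP (n + 1) x + lucasP n x

/-!
Writing `m + 2n = (m + n) + n` and combining the addition formula for `F` with d'Ocagne's
identity gives `F_{m+2n} = F_n L_{m+n} + (-1)^n F_m`. Taking `m = (2q-1)s` and `n = s` yields
`F_{(2q+1)s} = F_s L_{2qs} + (-1)^s F_{(2q-1)s}`, and unrolling this recursion in `q` down to
`F_s = F_s (L_0 - 1)` produces the alternating sum.
-/

section

variable (x : ℝ)

@[simp]
lemma fibP_zero : fibP 0 x = 0 := rfl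

@[simp]
lemma fibP_one : fibP 1 x = 1 := rfl

lemma fibP_add_two (n : ℕ) : fibP (n + 2) x = x * fibP (n + 1) x + fibP n x := rfl

@[simp]
lemma lucasP_zero : lucasP 0 x = 2 := rfl

@[simp]
lemma lucasP_one : lucasP 1 x = x := rfl

lemma lucasP_add_two (n : ℕ) : lucasP (n + 2) x = x * lucasP (n + 1) x + lucasP n x := rfl

lemma fibP_add (m n : ℕ) :
    fibP (m + n + 1) x = fibP (m + 1) x * fibP (n + 1) x + fibP m x * fibP n x := by
  induction n generalizing m with
  | zero => simp
  | succ n ih =>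
    rw [show m + (n + 1) + 1 = (m + 1) + n + 1 by ring, ih, fibP_add_two, fibP_add_two]
    ring

lemma fibP_mul_fibP_succ_sub (m n : ℕ) :
    fibP (m + n) x * fibP (n + 1) x - fibP (m + n + 1) x * fibP n x = (-1) ^ n * fibP m x := by
  induction n with
  | zero => simp
  | succ n ih =>
    rw [← add_assoc, fibP_add_two, show m + n + 1 + 1 = m + n + 2 by ring, fibP_add_two, pow_succ]
    linear_combination -ih

lemma lucasP_succ (n : ℕ) : lucasP (n + 1) x = fibP n x + fibP (n + 2) x := by
  induction n using Nat.twoStepInduction with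
  | zero => simp [fibP_add_two]
  | one =>
    simp only [Nat.reduceAdd, lucasP_add_two, fibP_add_two, zero_add, lucasP_one, lucasP_zero,
      fibP_one, fibP_zero]
    ring
  | more n ih₁ ih₂ =>
    rw [lucasP_add_two, ih₁, ih₂]
    linear_combination -fibP_add_two x n - fibP_add_two x (n + 2)

lemma fibP_add_two_mul (m n : ℕ) :
    fibP (m + 2 * n) x = fibP n x * lucasP (m + n) x + (-1) ^ n * fibP m x := by
  cases n with
  | zero => simp
  | succ r =>
    have hadd := fibP_add x (m + r + 1) r
    have hdoc := fibP_mul_fibP_succ_sub x m r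
    rw [show m + 2 * (r + 1) = m + r + 1 + r + 1 by ring, hadd,
      show m + (r + 1) = m + r + 1 by ring, lucasP_succ, pow_succ]
    linear_combination -hdoc

lemma fibP_odd_mul (q s : ℕ) :
    fibP ((2 * q + 1) * s) x = fibP s x *
      ((∑ k ∈ Finset.range (q + 1), (-1 : ℝ) ^ (s * k) * lucasP (2 * (q - k) * s) x)
        - (-1 : ℝ) ^ (s * q)) := by
  induction q with
  | zero => norm_num
  | succ q ih =>
    have hsum : ∑ k ∈ Finset.range (q + 2), (-1 : ℝ) ^ (s * k) * lucasP (2 * (q + 1 - k) * s) x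
        = lucasP (2 * (q + 1) * s) x + (-1) ^ s *
          ∑ k ∈ Finset.range (q + 1), (-1 : ℝ) ^ (s * k) * lucasP (2 * (q - k) * s) x := by
      rw [Finset.sum_range_succ', Finset.mul_sum, add_comm]
      simp only [mul_zero, pow_zero, one_mul, Nat.sub_zero, Nat.add_sub_add_right, mul_add_one,
        pow_add, mul_assoc, mul_left_comm ((-1 : ℝ) ^ s)]
    rw [hsum, show (2 * (q + 1) + 1) * s = (2 * q + 1) * s + 2 * s by ring, fibP_add_two_mul,
      show (2 * q + 1) * s + s = 2 * (q + 1) * s by ring, ih, mul_add_one s q, pow_add]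
    ring

end

theorem stmt_0_general (p s : ℕ) (hp : 1 ≤ p) (x : ℝ) :
    fibP ((2 * p - 1) * s) x =
      fibP s x *
        ((∑ k ∈ Finset.range p, (-1 : ℝ) ^ (s * k) * lucasP (2 * (p - k - 1) * s) x)
          - (-1 : ℝ) ^ (s * (p - 1))) := by
  obtain ⟨q, rfl⟩ := Nat.exists_eq_add_of_le' hp
  simpa only [Nat.add_sub_cancel, show 2 * (q + 1) - 1 = 2 * q + 1 by omega,
    show ∀ k, q + 1 - k - 1 = q - k by omega] using fibP_odd_mul x q s

theorem stmt_0 (p s : ℕ) (hp : 1 ≤ p) (hs : 1 ≤ s) (x : ℝ) :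
    fibP ((2 * p - 1) * s) x =
      fibP s x *
        ((∑ k ∈ Finset.range p, (-1 : ℝ) ^ (s * k) * lucasP (2 * (p - k - 1) * s) x)
          - (-1 : ℝ) ^ (s * (p - 1))) :=
  stmt_0_general p s hp x
end

section
/- For all integers M, N, K and all x, F_M(x)·F_N(x) − F_{M+K}(x)·F_{N-K}(x) = (-1)^{N-K} · F_{M+K-N}(x) · F_K(x). -/
/-- Fibonacci polynomials with integer index, extended by `F_{-n} = (-1)^{n+1} F_n`. -/
def fibZ (n : ℤ) (x : ℝ) : ℝ :=
  if 0 ≤ n then fibP n.toNat x else (-1 : ℝ) ^ ((-n).toNat + 1) * fibP (-n).toNat x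

/-- Lucas polynomials with integer index, extended by `L_{-n} = (-1)^n L_n`. -/
def lucasZ (n : ℤ) (x : ℝ) : ℝ :=
  if 0 ≤ n then lucasP n.toNat x else (-1 : ℝ) ^ (-n).toNat * lucasP (-n).toNat x

lemma fibP_binet (x α β : ℝ) (hsum : α + β = x) (hprod : α * β = -1) :
    ∀ n : ℕ, fibP n x * (α - β) = α ^ n - β ^ n
  | 0 => by simp [fibP]
  | 1 => by simp [fibP]
  | n + 2 => by
    have h1 := fibP_binet x α β hsum hprod (n + 1)
    have h0 := fibP_binet x α β hsum hprod n
    have hx : x = α + β := hsum.symm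
    subst hx
    show ((α + β) * fibP (n + 1) (α + β) + fibP n (α + β)) * (α - β) = _
    linear_combination (α + β) * h1 + h0 + (α ^ n - β ^ n) * hprod

lemma fibZ_binet (x α β : ℝ) (hsum : α + β = x) (hprod : α * β = -1)
    (hα : α ≠ 0) (hβ : β ≠ 0) (n : ℤ) :
    fibZ n x * (α - β) = α ^ n - β ^ n := by
  unfold fibZ
  rcases le_or_gt 0 n with h | h
  · rw [if_pos h]
    rw [← Int.toNat_of_nonneg h, zpow_natCast, zpow_natCast]
    exact fibP_binet x α β hsum hprod n.toNat
  · rw [if_neg (not_le.mpr h)]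
    set m := (-n).toNat with hm
    have hnm : n = -(m : ℤ) := by omega
    have hb := fibP_binet x α β hsum hprod m
    have hab : α ^ m * β ^ m = (-1 : ℝ) ^ m := by
      rw [← mul_pow, hprod]
    have hsq : ((-1 : ℝ) ^ m) * ((-1 : ℝ) ^ m) = 1 := by
      rw [← pow_add, (by ring : m + m = 2 * m), pow_mul]; norm_num
    rw [hnm, zpow_neg, zpow_neg, zpow_natCast, zpow_natCast]
    have hinvα : (α ^ m)⁻¹ = (-1 : ℝ) ^ m * β ^ m := by
      have h1 : ((-1 : ℝ) ^ m * β ^ m) * α ^ m = 1 := by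
        rw [mul_assoc, mul_comm (β ^ m), hab, hsq]
      exact (eq_inv_of_mul_eq_one_left h1).symm
    have hinvβ : (β ^ m)⁻¹ = (-1 : ℝ) ^ m * α ^ m := by
      have h1 : ((-1 : ℝ) ^ m * α ^ m) * β ^ m = 1 := by
        rw [mul_assoc, hab, hsq]
      exact (eq_inv_of_mul_eq_one_left h1).symm
    rw [hinvα, hinvβ, pow_succ]
    linear_combination (-1 : ℝ) ^ m * (-1) * hb

theorem stmt_2 (M N K : ℤ) (x : ℝ) :
    fibZ M x * fibZ N x - fibZ (M + K) x * fibZ (N - K) x =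
      (-1 : ℝ) ^ (N - K) * fibZ (M + K - N) x * fibZ K x := by
  set s := Real.sqrt (x ^ 2 + 4) with hs
  have hs2 : s ^ 2 = x ^ 2 + 4 := Real.sq_sqrt (by positivity)
  have hspos : 0 < s := Real.sqrt_pos.mpr (by positivity)
  set α := (x + s) / 2 with hα
  set β := (x - s) / 2 with hβ
  have hsum : α + β = x := by rw [hα, hβ]; ring
  have hprod : α * β = -1 := by
    rw [hα, hβ]; nlinarith [hs2]
  have hα0 : α ≠ 0 := by intro h; rw [h, zero_mul] at hprod; norm_num at hprod
  have hβ0 : β ≠ 0 := by intro h; rw [h, mul_zero] at hprod; norm_num at hprod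
  have hd : α - β ≠ 0 := by rw [hα, hβ]; intro h; nlinarith
  have key : ∀ n : ℤ, fibZ n x = (α ^ n - β ^ n) / (α - β) := fun n => by
    rw [← fibZ_binet x α β hsum hprod hα0 hβ0 n, mul_div_assoc, div_self hd, mul_one]
  have hneg : (-1 : ℝ) ^ (N - K) = α ^ (N - K) * β ^ (N - K) := by
    rw [← mul_zpow, hprod]
  rw [key M, key N, key (M + K), key (N - K), key (M + K - N), key K, hneg]
  rw [zpow_add₀ hα0, zpow_add₀ hβ0, zpow_sub₀ hα0, zpow_sub₀ hβ0,
      zpow_sub₀ hα0 (M + K) N, zpow_sub₀ hβ0 (M + K) N,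
      zpow_add₀ hα0, zpow_add₀ hβ0]
  have h1 : α ^ N ≠ 0 := zpow_ne_zero _ hα0
  have h2 : β ^ N ≠ 0 := zpow_ne_zero _ hβ0
  have h3 : α ^ K ≠ 0 := zpow_ne_zero _ hα0
  have h4 : β ^ K ≠ 0 := zpow_ne_zero _ hβ0
  field_simp
  ring
end

section
/- For all integers M, N, K and all x, F_M(x)·L_N(x) − F_{M+K}(x)·L_{N-K}(x) = (-1)^{N-K+1} · L_{M+K-N}(x) · F_K(x). -/
lemma closedP (x s : ℝ) (hs : s * s = x * x + 4) (n : ℕ) :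
    fibP n x * s = ((x+s)/2)^n - ((x-s)/2)^n ∧
    lucasP n x = ((x+s)/2)^n + ((x-s)/2)^n := by
  induction n using Nat.twoStepInduction with
  | zero => constructor <;> norm_num [fibP, lucasP]
  | one => constructor <;> simp [fibP, lucasP] <;> ring
  | more n ih1 ih2 =>
    obtain ⟨f1, l1⟩ := ih1; obtain ⟨f2, l2⟩ := ih2
    constructor
    · show (x * fibP (n+1) x + fibP n x) * s = _
      rw [add_mul, mul_assoc, f1, f2]
      simp only [pow_succ]
      linear_combination (-(((x+s)/2)^n - ((x-s)/2)^n)/4) * hs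
    · show x * lucasP (n+1) x + lucasP n x = _
      rw [l2, l1]
      simp only [pow_succ]
      linear_combination (-(((x+s)/2)^n + ((x-s)/2)^n)/4) * hs

lemma closedZ (x s : ℝ) (hs : s * s = x * x + 4)
    (hαβ : ((x+s)/2) * ((x-s)/2) = -1) (n : ℤ) :
    fibZ n x * s = ((x+s)/2)^n - ((x-s)/2)^n ∧
    lucasZ n x = ((x+s)/2)^n + ((x-s)/2)^n := by
  set α := (x+s)/2 with hαd
  set β := (x-s)/2 with hβd
  rcases le_or_gt 0 n with h | h
  · have hn : (n.toNat : ℤ) = n := Int.toNat_of_nonneg h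
    rw [fibZ, lucasZ, if_pos h, if_pos h, ← hn, zpow_natCast, zpow_natCast]
    exact closedP x s hs n.toNat
  · set m := (-n).toNat with hm
    have hmn : n = -(m : ℤ) := by omega
    have h1 : α ^ m * β ^ m = (-1:ℝ)^m := by rw [← mul_pow, hαβ]
    have hA : (α ^ m)⁻¹ = (-1:ℝ)^m * β ^ m :=
      inv_eq_of_mul_eq_one_left (by
        rw [mul_assoc, mul_comm (β^m), h1, ← mul_pow]; norm_num)
    have hB : (β ^ m)⁻¹ = (-1:ℝ)^m * α ^ m :=
      inv_eq_of_mul_eq_one_left (by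
        rw [mul_assoc, h1, ← mul_pow]; norm_num)
    obtain ⟨hf, hl⟩ := closedP x s hs m
    constructor
    · rw [fibZ, if_neg (not_le.2 h), ← hm, hmn, zpow_neg, zpow_neg,
        zpow_natCast, zpow_natCast, hA, hB, mul_assoc, hf, pow_succ]
      ring
    · rw [lucasZ, if_neg (not_le.2 h), ← hm, hmn, zpow_neg, zpow_neg,
        zpow_natCast, zpow_natCast, hA, hB, hl]
      ring

theorem stmt_3 (M N K : ℤ) (x : ℝ) :
    fibZ M x * lucasZ N x - fibZ (M + K) x * lucasZ (N - K) x =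
      (-1 : ℝ) ^ (N - K + 1) * lucasZ (M + K - N) x * fibZ K x := by
  set s := Real.sqrt (x*x+4) with hsd
  have hs : s * s = x*x+4 := Real.mul_self_sqrt (by nlinarith [mul_self_nonneg x])
  have hspos : 0 < s := Real.sqrt_pos.2 (by nlinarith [mul_self_nonneg x])
  have hs0 : s ≠ 0 := ne_of_gt hspos
  set α := (x+s)/2 with hαd
  set β := (x-s)/2 with hβd
  have hαβ : α * β = -1 := by
    rw [hαd, hβd]; field_simp; linear_combination -hs
  have hne : α * β ≠ 0 := by rw [hαβ]; norm_num
  have hα0 : α ≠ 0 := left_ne_zero_of_mul hne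
  have hβ0 : β ≠ 0 := right_ne_zero_of_mul hne
  have hF : ∀ n : ℤ, fibZ n x = (α^n - β^n)/s := by
    intro n
    rw [eq_div_iff hs0]
    exact (closedZ x s hs hαβ n).1
  have hL : ∀ n : ℤ, lucasZ n x = α^n + β^n := fun n => (closedZ x s hs hαβ n).2
  have hneg : ((-1:ℝ))^(N-K+1) = -(α^(N-K) * β^(N-K)) := by
    rw [← mul_zpow, hαβ, zpow_add₀ (by norm_num : (-1:ℝ) ≠ 0), zpow_one]
    ring
  rw [hF, hF, hF, hL, hL, hL, hneg]
  simp only [zpow_add₀ hα0, zpow_add₀ hβ0, zpow_sub₀ hα0, zpow_sub₀ hβ0]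
  field_simp
  ring
end

section
/- For all integers M, N, K and all x, (x²+4)·F_M(x)·F_N(x) − L_{M+K}(x)·L_{N-K}(x) = (-1)^{N-K+1} · L_{M+K-N}(x) · L_K(x). -/
theorem fibZ_natCast (n : ℕ) (x : ℝ) : fibZ n x = fibP n x := by
  simp [fibZ]

theorem fibZ_neg_natCast (n : ℕ) (x : ℝ) : fibZ (-n) x = (-1) ^ (n + 1) * fibP n x := by
  rcases n.eq_zero_or_pos with rfl | hn
  · simp [fibZ, fibP]
  · rw [fibZ, if_neg (by omega), neg_neg, Int.toNat_natCast]

theorem lucasZ_natCast (n : ℕ) (x : ℝ) : lucasZ n x = lucasP n x := by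
  simp [lucasZ]

theorem lucasZ_neg_natCast (n : ℕ) (x : ℝ) : lucasZ (-n) x = (-1) ^ n * lucasP n x := by
  rcases n.eq_zero_or_pos with rfl | hn
  · simp [lucasZ]
  · rw [lucasZ, if_neg (by omega), neg_neg, Int.toNat_natCast]

theorem zpow_neg_natCast_of_mul_eq_neg_one {F : Type*} [Field F] {a b : F} (h : a * b = -1)
    (n : ℕ) : a ^ (-(n : ℤ)) = (-1) ^ n * b ^ n := by
  have hinv : a⁻¹ = -b := inv_eq_of_mul_eq_one_right (by linear_combination -h)
  rw [zpow_neg, zpow_natCast, ← inv_pow, hinv, neg_pow]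

theorem binet_identity_of_mul_eq_neg_one {F : Type*} [Field F] {a b : F} (h : a * b = -1)
    (M N K : ℤ) :
    (a ^ M - b ^ M) * (a ^ N - b ^ N) - (a ^ (M + K) + b ^ (M + K)) * (a ^ (N - K) + b ^ (N - K)) =
      (-1) ^ (N - K + 1) * (a ^ (M + K - N) + b ^ (M + K - N)) * (a ^ K + b ^ K) := by
  have ha : a ≠ 0 := left_ne_zero_of_mul_eq_one (by linear_combination -h : a * -b = 1)
  have hb : b ≠ 0 := right_ne_zero_of_mul_eq_one (by linear_combination -h : -a * b = 1)
  have hsign : (-1 : F) ^ (N - K + 1) = -(a ^ (N - K) * b ^ (N - K)) := by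
    rw [← mul_zpow, h, zpow_add_one₀ (by norm_num)]; ring
  rw [hsign, zpow_add₀ ha, zpow_add₀ hb, zpow_sub₀ ha, zpow_sub₀ hb, zpow_sub₀ ha, zpow_sub₀ hb,
    zpow_add₀ ha, zpow_add₀ hb]
  field_simp
  ring

theorem exists_add_eq_mul_eq_neg_one (x : ℝ) : ∃ a b : ℝ, a + b = x ∧ a * b = -1 := by
  have hs : √(x ^ 2 + 4) ^ 2 = x ^ 2 + 4 := Real.sq_sqrt (by positivity)
  exact ⟨(x + √(x ^ 2 + 4)) / 2, (x - √(x ^ 2 + 4)) / 2, by ring,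
    by linear_combination -hs / 4⟩

section Binet

variable {x a b : ℝ} (hsum : a + b = x) (hprod : a * b = -1)
include hsum hprod

theorem sub_mul_fibP (n : ℕ) : (a - b) * fibP n x = a ^ n - b ^ n := by
  have ha : a ^ 2 = x * a + 1 := by linear_combination a * hsum - hprod
  have hb : b ^ 2 = x * b + 1 := by linear_combination b * hsum - hprod
  induction n using Nat.twoStepInduction with
  | zero => simp [fibP]
  | one => simp [fibP]
  | more n ih₀ ih₁ =>
    rw [fibP]
    linear_combination x * ih₁ + ih₀ - a ^ n * ha + b ^ n * hb

theorem lucasP_eq_pow_add_pow (n : ℕ) : lucasP n x = a ^ n + b ^ n := by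
  have ha : a ^ 2 = x * a + 1 := by linear_combination a * hsum - hprod
  have hb : b ^ 2 = x * b + 1 := by linear_combination b * hsum - hprod
  induction n using Nat.twoStepInduction with
  | zero => norm_num [lucasP]
  | one => simp [lucasP, hsum]
  | more n ih₀ ih₁ =>
    rw [lucasP]
    linear_combination x * ih₁ + ih₀ - a ^ n * ha - b ^ n * hb

theorem sub_mul_fibZ (n : ℤ) : (a - b) * fibZ n x = a ^ n - b ^ n := by
  have hprod' : b * a = -1 := by linear_combination hprod
  obtain ⟨m, rfl | rfl⟩ := Int.eq_nat_or_neg n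
  · simpa [fibZ_natCast] using sub_mul_fibP hsum hprod m
  · rw [fibZ_neg_natCast, zpow_neg_natCast_of_mul_eq_neg_one hprod,
      zpow_neg_natCast_of_mul_eq_neg_one hprod']
    linear_combination (-1 : ℝ) ^ (m + 1) * sub_mul_fibP hsum hprod m

theorem lucasZ_eq_zpow_add_zpow (n : ℤ) : lucasZ n x = a ^ n + b ^ n := by
  have hprod' : b * a = -1 := by linear_combination hprod
  obtain ⟨m, rfl | rfl⟩ := Int.eq_nat_or_neg n
  · simpa [lucasZ_natCast] using lucasP_eq_pow_add_pow hsum hprod m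
  · rw [lucasZ_neg_natCast, zpow_neg_natCast_of_mul_eq_neg_one hprod,
      zpow_neg_natCast_of_mul_eq_neg_one hprod', lucasP_eq_pow_add_pow hsum hprod]
    ring

end Binet

theorem stmt_4 (M N K : ℤ) (x : ℝ) :
    (x ^ 2 + 4) * fibZ M x * fibZ N x - lucasZ (M + K) x * lucasZ (N - K) x =
      (-1 : ℝ) ^ (N - K + 1) * lucasZ (M + K - N) x * lucasZ K x := by
  obtain ⟨a, b, hsum, hprod⟩ := exists_add_eq_mul_eq_neg_one x
  have hdisc : x ^ 2 + 4 = (a - b) ^ 2 := by rw [← hsum]; linear_combination 4 * hprod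
  calc (x ^ 2 + 4) * fibZ M x * fibZ N x - lucasZ (M + K) x * lucasZ (N - K) x
      = ((a - b) * fibZ M x) * ((a - b) * fibZ N x)
          - lucasZ (M + K) x * lucasZ (N - K) x := by rw [hdisc]; ring
    _ = (-1 : ℝ) ^ (N - K + 1) * lucasZ (M + K - N) x * lucasZ K x := by
      simp only [sub_mul_fibZ hsum hprod, lucasZ_eq_zpow_add_zpow hsum hprod]
      exact binet_identity_of_mul_eq_neg_one hprod M N K
end

section
/- Define the s-Fibopolynomial binom(n,k)_{F_s(x)} = (F_{sn}(x)·F_{s(n-1)}(x)···F_{s(n-k+1)}(x)) / (F_s(x)·F_{2s}(x)···F_{sk}(x)) for 0 ≤ k ≤ n, with binom(n,0)=binom(n,n)=1. Then for 1 ≤ k ≤ n−1, the recurrence binom(n,k)_{F_s(x)} = F_{s(n-k)+1}(x)·binom(n-1,k-1)_{F_s(x)} + F_{sk-1}(x)·binom(n-1,k)_{F_s(x)} holds. Consequently every s-Fibopolynomial is a polynomial in x. -/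
open scoped Polynomial

/-! The addition formula `F (a + b + 1) = F (a + 1) * F (b + 1) + F a * F b`, applied to
`s (n + 1) = s (n - k) + s (k + 1)`, gives the recurrence once both sides are expressed through
`binom(n, k)` by peeling one factor off each product. Since `binom(n, k) = 0` for `k > n`, the
recurrence holds for every `k ≤ n`, and induction on `n` shows that all `binom(n, k)` are
polynomials. The divisions are harmless because `F m ≠ 0` for `m ≠ 0`: evaluated at `x = 1`,
`F m` is the `m`-th Fibonacci number. -/

/-- Fibonacci polynomials in an arbitrary commutative ring (here used in `RatFunc ℚ`). -/
def fibGen {R : Type*} [CommRing R] (X : R) : ℕ → R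
  | 0 => 0
  | 1 => 1
  | n + 2 => X * fibGen X (n + 1) + fibGen X n

/-- The `s`-Fibopolynomial `binom(n,k)_{F_s(x)}`, as an element of the field of rational
functions `RatFunc ℚ` (with `x = RatFunc.X`). -/
noncomputable def sFibo (s n k : ℕ) : RatFunc ℚ :=
  (∏ i ∈ Finset.range k, fibGen RatFunc.X (s * (n - i))) /
    (∏ i ∈ Finset.range k, fibGen RatFunc.X (s * (i + 1)))

section fibGen

variable {R : Type*} [CommRing R]

@[simp]
theorem fibGen_zero (x : R) : fibGen x 0 = 0 := rfl

@[simp]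
theorem fibGen_one (x : R) : fibGen x 1 = 1 := rfl

theorem fibGen_add_two (x : R) (n : ℕ) :
    fibGen x (n + 2) = x * fibGen x (n + 1) + fibGen x n := rfl

theorem map_fibGen {S : Type*} [CommRing S] (f : R →+* S) (x : R) :
    ∀ n, f (fibGen x n) = fibGen (f x) n
  | 0 => by simp
  | 1 => by simp
  | n + 2 => by simp [fibGen_add_two, map_fibGen f x (n + 1), map_fibGen f x n]

theorem fibGen_one_eq_fib : ∀ n, fibGen (1 : R) n = Nat.fib n
  | 0 => by simp
  | 1 => by simp
  | n + 2 => by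
    rw [fibGen_add_two, fibGen_one_eq_fib (n + 1), fibGen_one_eq_fib n, Nat.fib_add_two]
    push_cast
    ring

theorem fibGen_add_add_one (x : R) (m n : ℕ) :
    fibGen x (m + n + 1) = fibGen x (m + 1) * fibGen x (n + 1) + fibGen x m * fibGen x n := by
  induction n generalizing m with
  | zero => simp
  | succ n ih =>
    rw [show m + (n + 1) + 1 = m + 1 + n + 1 by ring, ih, fibGen_add_two, fibGen_add_two]
    ring

end fibGen

theorem fibGen_polynomialX_ne_zero {n : ℕ} (hn : n ≠ 0) : fibGen (Polynomial.X : ℚ[X]) n ≠ 0 := by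
  intro h
  have h1 := congrArg (Polynomial.evalRingHom (1 : ℚ)) h
  rw [map_fibGen, Polynomial.coe_evalRingHom, Polynomial.eval_X, fibGen_one_eq_fib, Polynomial.eval_zero] at h1
  exact (Nat.fib_pos.2 (Nat.pos_of_ne_zero hn)).ne' (by exact_mod_cast h1)

theorem fibGen_ratFuncX (n : ℕ) :
    fibGen (RatFunc.X : RatFunc ℚ) n = algebraMap ℚ[X] (RatFunc ℚ) (fibGen Polynomial.X n) := by
  rw [map_fibGen, RatFunc.algebraMap_X]

theorem fibGen_ratFuncX_ne_zero {n : ℕ} (hn : n ≠ 0) : fibGen (RatFunc.X : RatFunc ℚ) n ≠ 0 := by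
  rw [fibGen_ratFuncX]
  exact (map_ne_zero_iff _ (RatFunc.algebraMap_injective ℚ)).2 (fibGen_polynomialX_ne_zero hn)

@[simp]
theorem sFibo_zero_right (s n : ℕ) : sFibo s n 0 = 1 := by simp [sFibo]

theorem sFibo_eq_zero_of_lt (s : ℕ) {n k : ℕ} (h : n < k) : sFibo s n k = 0 := by
  rw [sFibo, Finset.prod_eq_zero (Finset.mem_range.2 h) (by simp), zero_div]

theorem sFibo_succ_right (s n k : ℕ) :
    sFibo s n (k + 1) =
      fibGen RatFunc.X (s * (n - k)) / fibGen RatFunc.X (s * (k + 1)) * sFibo s n k := by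
  simp only [sFibo, Finset.prod_range_succ]
  ring

theorem sFibo_succ_succ (s n k : ℕ) :
    sFibo s (n + 1) (k + 1) =
      fibGen RatFunc.X (s * (n + 1)) / fibGen RatFunc.X (s * (k + 1)) * sFibo s n k := by
  simp only [sFibo, Finset.prod_range_succ' (fun i => fibGen _ (s * (n + 1 - i))),
    Finset.prod_range_succ (fun i => fibGen _ (s * (i + 1))), Nat.add_sub_add_right, Nat.sub_zero]
  ring

theorem sFibo_succ_succ_eq_add {s : ℕ} (hs : 1 ≤ s) {n k : ℕ} (hk : k ≤ n) :
    sFibo s (n + 1) (k + 1) =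
      fibGen RatFunc.X (s * (n - k) + 1) * sFibo s n k +
        fibGen RatFunc.X (s * (k + 1) - 1) * sFibo s n (k + 1) := by
  have hpos : 1 ≤ s * (k + 1) := Nat.one_le_iff_ne_zero.2 (by positivity)
  have hsplit : s * (n + 1) = s * (n - k) + (s * (k + 1) - 1) + 1 := by
    zify [hk, hpos]
    ring
  have hden : fibGen (RatFunc.X : RatFunc ℚ) (s * (k + 1)) ≠ 0 :=
    fibGen_ratFuncX_ne_zero (by positivity)
  rw [sFibo_succ_succ, sFibo_succ_right, hsplit, fibGen_add_add_one, Nat.sub_add_cancel hpos]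
  field_simp

theorem sFibo_mem_range {s : ℕ} (hs : 1 ≤ s) (n k : ℕ) :
    sFibo s n k ∈ (algebraMap ℚ[X] (RatFunc ℚ)).range := by
  have hfib (m : ℕ) : fibGen RatFunc.X m ∈ (algebraMap ℚ[X] (RatFunc ℚ)).range :=
    ⟨_, (fibGen_ratFuncX m).symm⟩
  induction n generalizing k with
  | zero =>
    rcases k with _ | k
    · exact (sFibo_zero_right s 0).symm ▸ one_mem _
    · exact (sFibo_eq_zero_of_lt s k.succ_pos).symm ▸ zero_mem _
  | succ n ih =>
    rcases k with _ | k
    · exact (sFibo_zero_right s _).symm ▸ one_mem _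
    rcases le_or_gt k n with hk | hk
    · rw [sFibo_succ_succ_eq_add hs hk]
      exact add_mem (mul_mem (hfib _) (ih k)) (mul_mem (hfib _) (ih (k + 1)))
    · exact (sFibo_eq_zero_of_lt s (Nat.succ_lt_succ hk)).symm ▸ zero_mem _

theorem stmt_6 (s : ℕ) (hs : 1 ≤ s) :
    (∀ n k : ℕ, 1 ≤ n → 1 ≤ k → k ≤ n - 1 →
      sFibo s n k =
        fibGen RatFunc.X (s * (n - k) + 1) * sFibo s (n - 1) (k - 1) +
          fibGen RatFunc.X (s * k - 1) * sFibo s (n - 1) k) ∧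
    (∀ n k : ℕ, k ≤ n → ∃ p : Polynomial ℚ,
      sFibo s n k = algebraMap (Polynomial ℚ) (RatFunc ℚ) p) := by
  refine ⟨fun n k hn hk hkn => ?_, fun n k _ => ?_⟩
  · obtain ⟨n, rfl⟩ : ∃ m, n = m + 1 := ⟨n - 1, by omega⟩
    obtain ⟨k, rfl⟩ : ∃ j, k = j + 1 := ⟨k - 1, by omega⟩
    simpa using sFibo_succ_succ_eq_add hs (by omega : k ≤ n)
  · obtain ⟨p, hp⟩ := sFibo_mem_range hs n k
    exact ⟨p, hp.symm⟩
end

section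
/- For all natural numbers s ≥ 1, q ≥ 0, and all x: F_s(x) · Σ_{n=0}^{q} (-1)^{s(n+q)} L_{2sn}(x) = L_{sq}(x) · F_{s(q+1)}(x). -/
/-!
Write `x = α + β` with `α β = -1`: the roots of `t² - x t - 1`, distinct since `x² + 4 > 0`.
Then `(α - β) F_n = αⁿ - βⁿ` and `L_n = αⁿ + βⁿ`, which turns the product formulas
`F_{a+b} L_b = F_{a+2b} + (-1)ᵇ F_a` and `F_b L_{a+b} = F_{a+2b} - (-1)ᵇ F_a` into ring
identities. The second one telescopes the alternating sum into `F_{s(2q+1)} + (-1)^{sq} F_s`,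
and the first one recognises this as `L_{sq} F_{s(q+1)}`.
-/

section Binet

variable {α β : ℝ}

theorem sub_mul_fibP_eq_pow_sub_pow (hαβ : α * β = -1) :
    ∀ n, (α - β) * fibP n (α + β) = α ^ n - β ^ n
  | 0 => by simp [fibP]
  | 1 => by simp [fibP]
  | n + 2 => by
    rw [fibP]
    linear_combination (α + β) * sub_mul_fibP_eq_pow_sub_pow hαβ (n + 1)
      + sub_mul_fibP_eq_pow_sub_pow hαβ n + (α ^ n - β ^ n) * hαβ

theorem lucasP_eq_pow_add_pow_s10 (hαβ : α * β = -1) : ∀ n, lucasP n (α + β) = α ^ n + β ^ n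
  | 0 => by norm_num [lucasP]
  | 1 => by simp [lucasP]
  | n + 2 => by
    rw [lucasP]
    linear_combination (α + β) * lucasP_eq_pow_add_pow_s10 hαβ (n + 1)
      + lucasP_eq_pow_add_pow_s10 hαβ n + (α ^ n + β ^ n) * hαβ

end Binet

theorem exists_add_eq_mul_eq_neg_one_ne (x : ℝ) :
    ∃ α β : ℝ, α + β = x ∧ α * β = -1 ∧ α ≠ β := by
  have hd : 0 < x ^ 2 + 4 := by positivity
  refine ⟨(x + √(x ^ 2 + 4)) / 2, (x - √(x ^ 2 + 4)) / 2, by ring, ?_, ?_⟩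
  · linear_combination -(Real.sq_sqrt hd.le) / 4
  · have := Real.sqrt_pos.mpr hd
    intro h
    linarith

theorem fibP_add_mul_lucasP (a b : ℕ) (x : ℝ) :
    fibP (a + b) x * lucasP b x = fibP (a + 2 * b) x + (-1) ^ b * fibP a x := by
  obtain ⟨α, β, rfl, hαβ, hne⟩ := exists_add_eq_mul_eq_neg_one_ne x
  have hpow : (α * β) ^ b = (-1) ^ b := by rw [hαβ]
  apply mul_left_cancel₀ (sub_ne_zero.mpr hne)
  rw [← mul_assoc, mul_add, mul_left_comm]
  simp only [sub_mul_fibP_eq_pow_sub_pow hαβ, lucasP_eq_pow_add_pow_s10 hαβ]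
  linear_combination (α ^ a - β ^ a) * hpow

theorem fibP_mul_lucasP_add (a b : ℕ) (x : ℝ) :
    fibP b x * lucasP (a + b) x = fibP (a + 2 * b) x - (-1) ^ b * fibP a x := by
  obtain ⟨α, β, rfl, hαβ, hne⟩ := exists_add_eq_mul_eq_neg_one_ne x
  have hpow : (α * β) ^ b = (-1) ^ b := by rw [hαβ]
  apply mul_left_cancel₀ (sub_ne_zero.mpr hne)
  rw [← mul_assoc, mul_sub, mul_left_comm]
  simp only [sub_mul_fibP_eq_pow_sub_pow hαβ, lucasP_eq_pow_add_pow_s10 hαβ]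
  linear_combination (β ^ a - α ^ a) * hpow

open Finset in
theorem fibP_mul_sum_lucasP (s q : ℕ) (x : ℝ) :
    fibP s x * ∑ n ∈ range (q + 1), (-1 : ℝ) ^ (s * (n + q)) * lucasP (2 * s * n) x =
      fibP (s * (2 * q + 1)) x + (-1) ^ (s * q) * fibP s x := by
  induction q with
  | zero => simp [lucasP]; ring
  | succ q ih =>
    have hsum : ∑ n ∈ range (q + 2), (-1 : ℝ) ^ (s * (n + (q + 1))) * lucasP (2 * s * n) x
        = (-1) ^ s * ∑ n ∈ range (q + 1), (-1 : ℝ) ^ (s * (n + q)) * lucasP (2 * s * n) x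
          + lucasP (2 * s * (q + 1)) x := by
      rw [sum_range_succ, mul_sum]
      congr 1
      · refine sum_congr rfl fun n _ => ?_
        rw [show s * (n + (q + 1)) = s + s * (n + q) by ring, pow_add, mul_assoc]
      · rw [show s * (q + 1 + (q + 1)) = 2 * (s * (q + 1)) by ring, pow_mul]
        simp
    have htel := fibP_mul_lucasP_add (s * (2 * q + 1)) s x
    rw [show s * (2 * q + 1) + s = 2 * s * (q + 1) by ring,
      show s * (2 * q + 1) + 2 * s = s * (2 * (q + 1) + 1) by ring] at htel
    rw [hsum, show s * (q + 1) = s + s * q by ring, pow_add]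
    linear_combination (-1 : ℝ) ^ s * ih + htel

theorem stmt_10_general (s q : ℕ) (x : ℝ) :
    fibP s x * ∑ n ∈ Finset.range (q + 1), (-1 : ℝ) ^ (s * (n + q)) * lucasP (2 * s * n) x =
      lucasP (s * q) x * fibP (s * (q + 1)) x := by
  have h := fibP_add_mul_lucasP s (s * q) x
  rw [show s + s * q = s * (q + 1) by ring, show s + 2 * (s * q) = s * (2 * q + 1) by ring] at h
  rw [fibP_mul_sum_lucasP, ← h, mul_comm]

theorem stmt_10 (s q : ℕ) (hs : 1 ≤ s) (x : ℝ) :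
    fibP s x * ∑ n ∈ Finset.range (q + 1), (-1 : ℝ) ^ (s * (n + q)) * lucasP (2 * s * n) x =
      lucasP (s * q) x * fibP (s * (q + 1)) x :=
  stmt_10_general s q x
end

section
/- For all natural numbers q: Σ_{n=0}^{q} F_n⁶ = binom(q+1,6)_F + binom(q+5,6)_F − 11·(binom(q+2,6)_F + binom(q+4,6)_F) − 64·binom(q+3,6)_F, where binom(n,6)_F denotes the Fibonomial coefficient. -/
/-- The Fibonomial coefficient `binom(n,k)_F` as a rational number
(`= 0` when `k > n`, since then `F_0 = 0` appears in the numerator). -/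
def fibBinom (n k : ℕ) : ℚ :=
  (∏ i ∈ Finset.range k, (Nat.fib (n - i) : ℚ)) /
    (∏ i ∈ Finset.range k, (Nat.fib (i + 1) : ℚ))

/-! The right-hand side is a discrete antiderivative of `F_n⁶`: its forward difference at `q` is
`F_{q+1}⁶`. For `q ≥ 4` every Fibonomial coefficient involved is a product of six consecutive
Fibonacci numbers over `240`, and writing each `F_{m+k}` as a linear form in `F_m, F_{m+1}` turns
the difference into a polynomial identity; the cases `q < 4` are checked numerically. -/

open Finset

lemma fibBinom_add_five_six (n : ℕ) :
    fibBinom (n + 5) 6 =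
      (Nat.fib n * Nat.fib (n + 1) * Nat.fib (n + 2) * Nat.fib (n + 3) * Nat.fib (n + 4) *
        Nat.fib (n + 5) : ℚ) / 240 := by
  simp only [fibBinom, prod_range_succ, prod_range_zero, Nat.reduceSubDiff, Nat.add_sub_cancel,
    Nat.sub_zero]
  norm_num
  ring

def fibBinomSixCombination (q : ℕ) : ℚ :=
  fibBinom (q + 1) 6 + fibBinom (q + 5) 6
    - 11 * (fibBinom (q + 2) 6 + fibBinom (q + 4) 6) - 64 * fibBinom (q + 3) 6

lemma fibBinomSixCombination_succ_sub (q : ℕ) :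
    fibBinomSixCombination (q + 1) - fibBinomSixCombination q = (Nat.fib (q + 1) : ℚ) ^ 6 := by
  rcases Nat.lt_or_ge q 4 with hq | hq
  · interval_cases q <;> norm_num [fibBinomSixCombination, fibBinom, prod_range_succ, Nat.fib]
  obtain ⟨m, rfl⟩ := Nat.exists_eq_add_of_le' hq
  simp only [fibBinomSixCombination, add_assoc, Nat.reduceAdd, fibBinom_add_five_six,
    Nat.fib_add_two, Nat.cast_add]
  ring

theorem stmt_17 (q : ℕ) :
    ∑ n ∈ Finset.range (q + 1), (Nat.fib n : ℚ) ^ 6 =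
      fibBinom (q + 1) 6 + fibBinom (q + 5) 6
        - 11 * (fibBinom (q + 2) 6 + fibBinom (q + 4) 6) - 64 * fibBinom (q + 3) 6 := by
  change _ = fibBinomSixCombination q
  induction q with
  | zero => norm_num [fibBinomSixCombination, fibBinom, prod_range_succ]
  | succ q ih => rw [sum_range_succ, ih, ← fibBinomSixCombination_succ_sub q, add_sub_cancel]
end

section
/- For all natural numbers s ≥ 1, q ≥ 0, and all x: Σ_{n=0}^{q} F_{4sn}(x) = F_{4s}(x) · ( binom(q+1,4)_{F_s(x)} + (-1)^{s+1}·L_{2s}(x)·binom(q+2,4)_{F_s(x)} + binom(q+3,4)_{F_s(x)} ). -/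
/-- Numerator of the `s`-Fibopolynomial `binom(m,4)_{F_s(x)}`:
`F_{sm}·F_{s(m-1)}·F_{s(m-2)}·F_{s(m-3)}` (it vanishes for `m < 4`). -/
def sFiboNum4 (s m : ℕ) (x : ℝ) : ℝ :=
  ∏ i ∈ Finset.range 4, fibP (s * (m - i)) x

/-- Denominator of the `s`-Fibopolynomial `binom(m,4)_{F_s(x)}`:
`F_s·F_{2s}·F_{3s}·F_{4s}`. -/
def sFiboDen4 (s : ℕ) (x : ℝ) : ℝ :=
  ∏ i ∈ Finset.range 4, fibP (s * (i + 1)) x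

/-!
Write `U = U(P, Q)` and `V = V(P, Q)` for the Lucas sequences of `X² - P X + Q`. The multiplication
formula `U_{sk}(P, Q) = U_s(P, Q) · U_k(V_s, Q^s)` gives `F_{sk}(x) = F_s(x) · U_k(L_s(x), (-1)^s)`, so
after dividing by `F_s(x)^5` the identity is one about a Lucas sequence with `Q² = 1`, in which
`(-1)^{s+1} L_{2s} = -Q (P² - 2Q)`.

If `α, β` are the roots of `X² - P X + Q`, the product `U_n U_{n+1} U_{n+2} U_{n+3}` is a combination
of `α^{4n}`, `(Qα²)^n`, `Q^{2n}`, `(Qβ²)^n`, `β^{4n}`. The shift operator with characteristic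
polynomial `(E - Q²)(E² - Q(P² - 2Q)E + Q⁴)` kills the middle three and leaves `P(P² - Q) U_{4n}`.
For `Q² = 1` this polynomial is `(E - 1)(E² - Q(P² - 2Q)E + 1)`, so the sum telescopes.
-/

open Finset

section LucasSequence

variable {R : Type*} [CommRing R] (P Q : R)

def lucasU : ℕ → R
  | 0 => 0
  | 1 => 1
  | n + 2 => P * lucasU (n + 1) - Q * lucasU n

def lucasV : ℕ → R
  | 0 => 2
  | 1 => P
  | n + 2 => P * lucasV (n + 1) - Q * lucasV n

theorem lucasU_add_two (n : ℕ) :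
    lucasU P Q (n + 2) = P * lucasU P Q (n + 1) - Q * lucasU P Q n := rfl

theorem lucasU_add (m n : ℕ) :
    lucasU P Q (m + n + 1) =
      lucasU P Q (m + 1) * lucasU P Q (n + 1) - Q * lucasU P Q m * lucasU P Q n := by
  induction n using Nat.twoStepInduction with
  | zero => simp [lucasU]
  | one => simp [lucasU]; ring
  | more n ih₁ ih₂ =>
    rw [show m + (n + 2) + 1 = m + n + 1 + 2 by omega, lucasU_add_two,
      show m + n + 1 + 1 = m + (n + 1) + 1 by omega, ih₁, ih₂, lucasU_add_two P Q (n + 1),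
      lucasU_add_two P Q n]
    ring

theorem lucasV_add_one (n : ℕ) : lucasV P Q (n + 1) = lucasU P Q (n + 2) - Q * lucasU P Q n := by
  induction n using Nat.twoStepInduction with
  | zero => simp [lucasU, lucasV]
  | one => simp [lucasU, lucasV]; ring
  | more n ih₁ ih₂ =>
    rw [show n + 2 + 1 = n + 1 + 2 by omega, lucasV, ih₁, ih₂]
    simp only [lucasU_add_two]
    ring

theorem lucasU_dOcagne (m s : ℕ) :
    lucasU P Q (m + s + 1) * lucasU P Q s - lucasU P Q (s + 1) * lucasU P Q (m + s) =
      -Q ^ s * lucasU P Q m := by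
  induction s with
  | zero => simp [lucasU]
  | succ s ih =>
    rw [show m + (s + 1) + 1 = m + s + 2 by omega, lucasU_add_two, lucasU_add_two P Q s,
      ← add_assoc]
    linear_combination Q * ih

theorem lucasU_add_two_mul (m s : ℕ) :
    lucasU P Q (m + 2 * s) = lucasV P Q s * lucasU P Q (m + s) - Q ^ s * lucasU P Q m := by
  cases s with
  | zero => simp [lucasV]; ring
  | succ t =>
    have hadd := lucasU_add P Q (m + t + 1) t
    rw [show m + t + 1 + t + 1 = m + 2 * (t + 1) by ring] at hadd
    rw [hadd, lucasV_add_one, ← add_assoc]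
    linear_combination lucasU_dOcagne P Q m (t + 1)

theorem lucasU_mul (s k : ℕ) :
    lucasU P Q (s * k) = lucasU P Q s * lucasU (lucasV P Q s) (Q ^ s) k := by
  induction k using Nat.twoStepInduction with
  | zero => simp [lucasU]
  | one => simp [lucasU]
  | more k ih₁ ih₂ =>
    rw [show s * (k + 2) = s * k + 2 * s by ring, lucasU_add_two_mul,
      show s * k + s = s * (k + 1) by ring, ih₁, ih₂, lucasU_add_two]
    ring

theorem lucasV_two_mul (s : ℕ) : lucasV P Q (2 * s) = lucasV P Q s ^ 2 - 2 * Q ^ s := by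
  cases s with
  | zero => norm_num [lucasV]
  | succ t =>
    have hodd := lucasU_add P Q (t + 1) (t + 1)
    have hodd' := lucasU_add P Q t t
    have hcassini := lucasU_dOcagne P Q 1 t
    rw [show 2 * (t + 1) = (t + t + 1) + 1 by ring, lucasV_add_one, lucasV_add_one,
      show t + t + 1 + 2 = t + 1 + (t + 1) + 1 by ring, hodd, hodd']
    rw [show 1 + t + 1 = t + 1 + 1 by ring, add_comm 1 t, show lucasU P Q 1 = 1 from rfl]
      at hcassini
    linear_combination (2 * Q) * hcassini

theorem lucasU_two_mul_add_one (n : ℕ) :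
    lucasU P Q (2 * n + 1) = lucasU P Q (n + 1) ^ 2 - Q * lucasU P Q n ^ 2 := by
  rw [two_mul, lucasU_add]
  ring

theorem lucasU_two_mul (n : ℕ) :
    lucasU P Q (2 * n) = lucasU P Q n * (2 * lucasU P Q (n + 1) - P * lucasU P Q n) := by
  cases n with
  | zero => simp [lucasU]
  | succ t =>
    rw [show 2 * (t + 1) = t + 1 + t + 1 by ring, lucasU_add, lucasU_add_two]
    ring

def fallingProd4 (u : ℕ → R) (m : ℕ) : R := ∏ i ∈ range 4, u (m - i)

theorem lucasU_four_mul (k : ℕ) :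
    P * (P ^ 2 - Q) * lucasU P Q (4 * k) =
      fallingProd4 (lucasU P Q) (k + 3) + (Q ^ 2 - Q * P ^ 2) * fallingProd4 (lucasU P Q) (k + 2) +
        Q ^ 3 * (P ^ 2 - Q) * fallingProd4 (lucasU P Q) (k + 1) -
          Q ^ 6 * fallingProd4 (lucasU P Q) k := by
  match k with
  | 0 => simp [fallingProd4, prod_range_succ, lucasU]
  | 1 | 2 => simp [fallingProd4, prod_range_succ, lucasU]; ring
  | n + 3 =>
    -- once unfolded, both sides are quartic forms in `lucasU P Q n` and `lucasU P Q (n + 1)`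
    rw [show 4 * (n + 3) = 2 * (2 * (n + 3)) by ring, lucasU_two_mul, lucasU_two_mul_add_one,
      lucasU_two_mul]
    simp only [fallingProd4, prod_range_succ, range_one, prod_singleton, tsub_zero,
      Nat.add_one_sub_one, Nat.reduceSubDiff, add_tsub_cancel_right, lucasU_add_two]
    ring

theorem sum_range_lucasU_four_mul (hQ : Q ^ 2 = 1) (q : ℕ) :
    P * (P ^ 2 - Q) * ∑ k ∈ range (q + 1), lucasU P Q (4 * k) =
      fallingProd4 (lucasU P Q) (q + 1) - Q * (P ^ 2 - 2 * Q) * fallingProd4 (lucasU P Q) (q + 2) +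
        fallingProd4 (lucasU P Q) (q + 3) := by
  set f := fallingProd4 (lucasU P Q)
  let g (k : ℕ) : R := f k - Q * (P ^ 2 - 2 * Q) * f (k + 1) + f (k + 2)
  have hg₀ : g 0 = 0 := by simp [g, f, fallingProd4, prod_range_succ, lucasU]
  have hg_succ (k : ℕ) : g (k + 1) - g k = P * (P ^ 2 - Q) * lucasU P Q (4 * k) := by
    linear_combination (-1) * lucasU_four_mul P Q k +
      (f (k + 2) - (Q * P ^ 2 - Q ^ 2 + 1) * f (k + 1) + (Q ^ 4 + Q ^ 2 + 1) * f k) * hQ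
  rw [mul_sum, ← sum_congr rfl fun k _ ↦ hg_succ k, sum_range_sub, hg₀]
  ring

end LucasSequence

theorem fibP_eq_lucasU (n : ℕ) (x : ℝ) : fibP n x = lucasU x (-1) n := by
  induction n using Nat.twoStepInduction with
  | zero => rfl
  | one => rfl
  | more n ih₁ ih₂ => rw [fibP, ih₁, ih₂, lucasU_add_two]; ring

theorem lucasP_eq_lucasV (n : ℕ) (x : ℝ) : lucasP n x = lucasV x (-1) n := by
  induction n using Nat.twoStepInduction with
  | zero => rfl
  | one => rfl
  | more n ih₁ ih₂ => rw [lucasP, ih₁, ih₂, lucasV]; ring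

theorem fibP_mul (s k : ℕ) (x : ℝ) :
    fibP (s * k) x = fibP s x * lucasU (lucasP s x) ((-1) ^ s) k := by
  simp only [fibP_eq_lucasU, lucasP_eq_lucasV]
  exact lucasU_mul _ _ s k

theorem lucasP_two_mul (s : ℕ) (x : ℝ) : lucasP (2 * s) x = lucasP s x ^ 2 - 2 * (-1) ^ s := by
  simp only [lucasP_eq_lucasV]
  exact lucasV_two_mul _ _ s

theorem stmt_19_general (s q : ℕ) (x : ℝ) :
    sFiboDen4 s x * ∑ n ∈ Finset.range (q + 1), fibP (4 * s * n) x =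
      fibP (4 * s) x *
        (sFiboNum4 s (q + 1) x + (-1 : ℝ) ^ (s + 1) * lucasP (2 * s) x * sFiboNum4 s (q + 2) x +
          sFiboNum4 s (q + 3) x) := by
  set F := fibP s x
  set L := lucasP s x
  set u := lucasU L ((-1 : ℝ) ^ s)
  have hu (k : ℕ) : fibP (s * k) x = F * u k := fibP_mul s k x
  have hden : sFiboDen4 s x = F ^ 4 * (L * (L ^ 2 - (-1) ^ s) * u 4) := by
    simp [sFiboDen4, prod_range_succ, hu, u, lucasU]
    ring
  have hnum (m : ℕ) : sFiboNum4 s m x = F ^ 4 * fallingProd4 u m := by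
    simp [sFiboNum4, fallingProd4, hu, prod_mul_distrib]
  have hsum : ∑ n ∈ range (q + 1), fibP (4 * s * n) x = F * ∑ n ∈ range (q + 1), u (4 * n) := by
    simp only [mul_sum, mul_comm 4 s, mul_assoc, hu]
  have hF4 : fibP (4 * s) x = F * u 4 := by rw [mul_comm, hu]
  have hL : (-1) ^ (s + 1) * lucasP (2 * s) x = -(-1) ^ s * (L ^ 2 - 2 * (-1) ^ s) := by
    rw [lucasP_two_mul, pow_succ]
    ring
  have hQ : ((-1 : ℝ) ^ s) ^ 2 = 1 := by rw [← pow_mul, mul_comm, pow_mul, neg_one_sq, one_pow]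
  rw [hden, hsum, hF4, hL, hnum, hnum, hnum]
  linear_combination F ^ 5 * u 4 * sum_range_lucasU_four_mul L _ hQ q

/-- Identity (3.18), stated after clearing the denominator
`F_s(x)·F_{2s}(x)·F_{3s}(x)·F_{4s}(x)` of the s-Fibopolynomials `binom(·,4)_{F_s(x)}`. -/
theorem stmt_19 (s q : ℕ) (hs : 1 ≤ s) (x : ℝ) :
    sFiboDen4 s x * ∑ n ∈ Finset.range (q + 1), fibP (4 * s * n) x =
      fibP (4 * s) x *
        (sFiboNum4 s (q + 1) x + (-1 : ℝ) ^ (s + 1) * lucasP (2 * s) x * sFiboNum4 s (q + 2) x +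
          sFiboNum4 s (q + 3) x) :=
  stmt_19_general s q x
end
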